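/- Let (T_n^i)_{n≥1} and (T_n^j)_{n≥1} be the i-th and j-th coordinates of an i.i.d. sequence of random vectors, with means μ_i and μ_j respectively, both finite and positive, and let N^i, N^j be the associated renewal counting processes. Suppose v_i, v_j : [0,∞) → [0,∞) satisfy v_j(t) → ∞ and liminf_{t→∞} v_i(t)/v_j(t) > μ_i/μ_j. Then N^i(v_i(t)) − N^j(v_j(t)) → ∞ almost surely as t → ∞; in particular P(N^i(v_i(t)) ≤ N^j(v_j(t))) → 0. -/

import Mathlib

/-!
By the strong law of large numbers `S_n / n → μ` almost surely, and since
`S_{N(t)} ≤ t < S_{N(t)+1}` this inverts to `N(t) / t → 1 / μ`. Choose `c` strictly between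
`μ_i / μ_j` and the liminf, so that eventually `v_i ≥ c v_j`. Then
`(N^i(v_i) - N^j(v_j)) / v_j ≥ c N^i(v_i) / v_i - N^j(v_j) / v_j → c / μ_i - 1 / μ_j > 0`,
so the difference grows linearly in `v_j → ∞`. The events `{N^i(v_i) ≤ N^j(v_j)}` eventually
miss almost every `ω`, hence their probabilities tend to `0` by dominated convergence.
-/

open Filter Topology MeasureTheory ProbabilityTheory

/-- `sSup` of an unbounded set of naturals is the junk value `0`, so the lemmas about
`renewalCount s` assume `s → ∞`. -/
noncomputable def renewalCount (s : ℕ → ℝ) (t : ℝ) : ℕ :=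
  sSup {n : ℕ | s n ≤ t}

section RenewalCount

variable {s : ℕ → ℝ} {μ : ℝ}

theorem bddAbove_setOf_le_of_tendsto_atTop (hs : Tendsto s atTop atTop) (t : ℝ) :
    BddAbove {n | s n ≤ t} := by
  obtain ⟨N, hN⟩ := eventually_atTop.1 (hs.eventually_gt_atTop t)
  exact ⟨N, fun n hn => not_lt.1 fun hNn => (hN n hNn.le).not_ge hn⟩

theorem le_renewalCount (hs : Tendsto s atTop atTop) {n : ℕ} {t : ℝ} (h : s n ≤ t) :
    n ≤ renewalCount s t :=
  le_csSup (bddAbove_setOf_le_of_tendsto_atTop hs t) h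

theorem apply_renewalCount_le (hs : Tendsto s atTop atTop) {t : ℝ} (h : s 0 ≤ t) :
    s (renewalCount s t) ≤ t :=
  Nat.sSup_mem ⟨0, h⟩ (bddAbove_setOf_le_of_tendsto_atTop hs t)

theorem lt_apply_renewalCount_succ (hs : Tendsto s atTop atTop) (t : ℝ) :
    t < s (renewalCount s t + 1) :=
  not_le.1 fun h => (le_renewalCount hs h).not_gt (Nat.lt_succ_self _)

theorem tendsto_renewalCount_atTop (hs : Tendsto s atTop atTop) :
    Tendsto (renewalCount s) atTop atTop :=
  tendsto_atTop.2 fun n => (eventually_ge_atTop (s n)).mono fun _ => le_renewalCount hs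

theorem tendsto_atTop_of_tendsto_div_natCast (hμ : 0 < μ)
    (h : Tendsto (fun n : ℕ => s n / n) atTop (𝓝 μ)) : Tendsto s atTop atTop := by
  refine (h.pos_mul_atTop hμ tendsto_natCast_atTop_atTop).congr' ?_
  filter_upwards [eventually_ne_atTop 0] with n hn
  exact div_mul_cancel₀ _ (Nat.cast_ne_zero.2 hn)

theorem tendsto_succ_div_natCast_of_tendsto_div_natCast
    (h : Tendsto (fun n : ℕ => s n / n) atTop (𝓝 μ)) :
    Tendsto (fun n : ℕ => s (n + 1) / n) atTop (𝓝 μ) := by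
  have hshift : Tendsto (fun n : ℕ => s (n + 1) / (n + 1 : ℕ)) atTop (𝓝 μ) :=
    h.comp (tendsto_add_atTop_nat 1)
  have hratio : Tendsto (fun n : ℕ => ((n : ℝ) + 1) / n) atTop (𝓝 1) := by
    simpa [add_comm] using tendsto_add_mul_div_add_mul_atTop_nhds (1 : ℝ) 0 1 one_ne_zero
  refine (mul_one μ ▸ hshift.mul hratio).congr' ?_
  filter_upwards [eventually_ne_atTop 0] with n hn
  have : (n : ℝ) ≠ 0 := Nat.cast_ne_zero.2 hn
  push_cast
  field_simp

theorem tendsto_renewalCount_div (hμ : 0 < μ)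
    (h : Tendsto (fun n : ℕ => s n / n) atTop (𝓝 μ)) :
    Tendsto (fun t => (renewalCount s t : ℝ) / t) atTop (𝓝 μ⁻¹) := by
  have hs := tendsto_atTop_of_tendsto_div_natCast hμ h
  have hN := tendsto_renewalCount_atTop hs
  have hsq : Tendsto (fun t => t / (renewalCount s t : ℝ)) atTop (𝓝 μ) := by
    refine tendsto_of_tendsto_of_tendsto_of_le_of_le' (h.comp hN)
      ((tendsto_succ_div_natCast_of_tendsto_div_natCast h).comp hN) ?_ ?_
    · filter_upwards [eventually_ge_atTop (s 0)] with t ht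
      exact div_le_div_of_nonneg_right (apply_renewalCount_le hs ht) (Nat.cast_nonneg _)
    · exact Eventually.of_forall fun t =>
        div_le_div_of_nonneg_right (lt_apply_renewalCount_succ hs t).le (Nat.cast_nonneg _)
  simpa only [inv_div] using hsq.inv₀ hμ.ne'

end RenewalCount

theorem Nat.sSup_eq_iSup_ite (A : Set ℕ) [DecidablePred (· ∈ A)] :
    sSup A = ⨆ n, if n ∈ A then n else 0 := by
  set g : ℕ → ℕ := fun n => if n ∈ A then n else 0
  have hg : ∀ n ∈ A, g n = n := fun n hn => if_pos hn
  by_cases hA : BddAbove A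
  · have hbdd : BddAbove (Set.range g) := by
      obtain ⟨b, hb⟩ := hA
      refine ⟨b, Set.forall_mem_range.2 fun n => ?_⟩
      by_cases hn : n ∈ A
      · simpa [g, hn] using hb hn
      · simp [g, hn]
    refine le_antisymm (csSup_le' fun n hn => hg n hn ▸ le_ciSup hbdd n) (ciSup_le fun n => ?_)
    by_cases hn : n ∈ A
    · simpa [g, hn] using le_csSup hA hn
    · simp [g, hn]
  · have hg : ¬BddAbove (Set.range g) := fun h =>
      hA (h.mono fun n hn => (⟨n, hg n hn⟩ : n ∈ Set.range g))
    rw [iSup, csSup_of_not_bddAbove hA, csSup_of_not_bddAbove hg]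

theorem measurable_renewalCount {Ω : Type*} [MeasurableSpace Ω] {s : ℕ → Ω → ℝ}
    (hs : ∀ n, Measurable (s n)) (t : ℝ) :
    Measurable fun ω => renewalCount (fun n => s n ω) t := by
  classical
  simp_rw [renewalCount, Nat.sSup_eq_iSup_ite, Set.mem_ofPred_eq]
  exact Measurable.iSup fun n =>
    Measurable.ite (measurableSet_le (hs n) measurable_const) measurable_const measurable_const

theorem ae_tendsto_renewalCount_comp_div {Ω E : Type*} [MeasurableSpace Ω] [MeasurableSpace E]
    {P : Measure Ω} {T : ℕ → Ω → E} {φ : E → ℝ} {μ : ℝ} (hφ : Measurable φ)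
    (hindep : iIndepFun T P) (hident : ∀ n, IdentDistrib (T n) (T 0) P P)
    (hint : Integrable (fun ω => φ (T 0 ω)) P) (hmean : ∫ ω, φ (T 0 ω) ∂P = μ) (hμ : 0 < μ) :
    ∀ᵐ ω ∂P, Tendsto
      (fun t => (renewalCount (fun n => ∑ k ∈ Finset.range n, φ (T k ω)) t : ℝ) / t)
      atTop (𝓝 μ⁻¹) := by
  have hslln := strong_law_ae_real (fun n ω => φ (T n ω)) hint
    (fun i j hij => (hindep.comp (fun _ => φ) (fun _ => hφ)).indepFun hij)
    (fun n => (hident n).comp hφ)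
  filter_upwards [hslln] with ω hω
  exact tendsto_renewalCount_div hμ (hmean ▸ hω)

theorem eventually_mul_le_of_lt_liminf_div {α : Type*} {l : Filter α} {v w : α → ℝ} {c : ℝ}
    (hc : c < liminf (fun t => v t / w t) l) (hv : ∀ᶠ t in l, 0 ≤ v t)
    (hw : ∀ᶠ t in l, 0 < w t) : ∀ᶠ t in l, c * w t ≤ v t := by
  have hbdd : IsBoundedUnder (· ≥ ·) l (fun t => v t / w t) :=
    isBoundedUnder_of_eventually_ge (a := 0) (by
      filter_upwards [hv, hw] with t hvt hwt
      exact div_nonneg hvt hwt.le)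
  filter_upwards [eventually_lt_of_lt_liminf hc hbdd, hw] with t hct hwt
  exact ((lt_div_iff₀ hwt).1 hct).le

theorem tendsto_sub_atTop_of_tendsto_div {α : Type*} {l : Filter α} {x y v w : α → ℝ}
    {a b c : ℝ} (ha : 0 < a) (hc : 0 < c) (hb : b < c * a)
    (hx : Tendsto (fun t => x t / v t) l (𝓝 a)) (hy : Tendsto (fun t => y t / w t) l (𝓝 b))
    (hw : Tendsto w l atTop) (hvw : ∀ᶠ t in l, c * w t ≤ v t) :
    Tendsto (fun t => x t - y t) l atTop := by
  have hgap : 0 < (c * a - b) / 2 := half_pos (sub_pos.2 hb)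
  have hlim : Tendsto (fun t => c * (x t / v t) - y t / w t) l (𝓝 (c * a - b)) :=
    (hx.const_mul c).sub hy
  refine tendsto_atTop_mono' l ?_ (hw.const_mul_atTop hgap)
  filter_upwards [hlim.eventually (lt_mem_nhds (half_lt_self (sub_pos.2 hb))),
    hx.eventually (lt_mem_nhds ha), hw.eventually_gt_atTop 0, hvw] with t hlow hxv hwt hvwt
  have hvt : 0 < v t := (mul_pos hc hwt).trans_le hvwt
  have hratio : c * (x t / v t) ≤ x t / w t :=
    calc c * (x t / v t) = x t / v t * c := mul_comm _ _
      _ ≤ x t / v t * (v t / w t) := by gcongr; exact (le_div_iff₀ hwt).2 hvwt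
      _ = x t / w t := div_mul_div_cancel₀ hvt.ne'
  rw [← le_div_iff₀ hwt, sub_div (x t)]
  linarith

theorem renewal_counts_separate_general
    {Ω : Type*} [MeasurableSpace Ω] (P : Measure Ω) [IsProbabilityMeasure P]
    (T : ℕ → Ω → ℝ × ℝ) (μi μj : ℝ) (vi vj : ℝ → ℝ)
    (hmeas : ∀ n, Measurable (T n))
    (hindep : iIndepFun T P)
    (hident : ∀ n, IdentDistrib (T n) (T 0) P P)
    (hint1 : Integrable (fun ω => (T 0 ω).1) P)
    (hint2 : Integrable (fun ω => (T 0 ω).2) P)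
    (hmean1 : ∫ ω, (T 0 ω).1 ∂P = μi) (hmean2 : ∫ ω, (T 0 ω).2 ∂P = μj)
    (hμi : 0 < μi) (hμj : 0 < μj)
    (hvnonneg : ∀ t, 0 ≤ t → 0 ≤ vi t ∧ 0 ≤ vj t)
    (hvjtop : Tendsto vj atTop atTop)
    (hliminf : μi / μj < Filter.liminf (fun t => vi t / vj t) atTop)
    (Ni Nj : ℝ → Ω → ℕ)
    (hNi : ∀ t ω, Ni t ω = sSup {n : ℕ | ∑ k ∈ Finset.range n, (T k ω).1 ≤ t})
    (hNj : ∀ t ω, Nj t ω = sSup {n : ℕ | ∑ k ∈ Finset.range n, (T k ω).2 ≤ t}) :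
    (∀ᵐ ω ∂P,
        Tendsto (fun t : ℝ => ((Ni (vi t) ω : ℝ) - (Nj (vj t) ω : ℝ)))
          atTop atTop) ∧
      Tendsto (fun t : ℝ => P {ω | Ni (vi t) ω ≤ Nj (vj t) ω}) atTop (𝓝 0) := by
  obtain rfl : Ni = fun t ω => renewalCount (fun n => ∑ k ∈ Finset.range n, (T k ω).1) t :=
    funext₂ hNi
  obtain rfl : Nj = fun t ω => renewalCount (fun n => ∑ k ∈ Finset.range n, (T k ω).2) t :=
    funext₂ hNj
  obtain ⟨c, hμc, hcL⟩ := exists_between hliminf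
  have hc : 0 < c := (div_pos hμi hμj).trans hμc
  have hvw : ∀ᶠ t in atTop, c * vj t ≤ vi t :=
    eventually_mul_le_of_lt_liminf_div hcL
      ((eventually_ge_atTop 0).mono fun t ht => (hvnonneg t ht).1) (hvjtop.eventually_gt_atTop 0)
  have hvi : Tendsto vi atTop atTop := tendsto_atTop_mono' _ hvw (hvjtop.const_mul_atTop hc)
  have hgap : μj⁻¹ < c * μi⁻¹ :=
    calc μj⁻¹ = μi / μj * μi⁻¹ := by field_simp
      _ < c * μi⁻¹ := by gcongr
  have hsep : ∀ᵐ ω ∂P, Tendsto (fun t : ℝ =>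
      (renewalCount (fun n => ∑ k ∈ Finset.range n, (T k ω).1) (vi t) : ℝ) -
        renewalCount (fun n => ∑ k ∈ Finset.range n, (T k ω).2) (vj t)) atTop atTop := by
    filter_upwards [ae_tendsto_renewalCount_comp_div measurable_fst hindep hident hint1 hmean1 hμi,
      ae_tendsto_renewalCount_comp_div measurable_snd hindep hident hint2 hmean2 hμj] with ω hi hj
    exact tendsto_sub_atTop_of_tendsto_div (inv_pos.2 hμi) hc hgap (hi.comp hvi) (hj.comp hvjtop)
      hvjtop hvw
  refine ⟨hsep, ?_⟩
  have hmeas_sum (φ : ℝ × ℝ → ℝ) (hφ : Measurable φ) (n : ℕ) :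
      Measurable fun ω => ∑ k ∈ Finset.range n, φ (T k ω) :=
    Finset.measurable_sum _ fun k _ => hφ.comp (hmeas k)
  simpa using tendsto_measure_of_ae_tendsto_indicator_of_isFiniteMeasure atTop
    MeasurableSet.empty (fun t => measurableSet_le
      (measurable_renewalCount (hmeas_sum _ measurable_fst) (vi t))
      (measurable_renewalCount (hmeas_sum _ measurable_snd) (vj t)))
    (hsep.mono fun ω hω => (hω.eventually_gt_atTop 0).mono fun t ht => by simpa using ht)

/-- separation of renewal counting processes under the
time-scale separation condition. -/
theorem renewal_counts_separate
    {Ω : Type*} [MeasurableSpace Ω] (P : Measure Ω) [IsProbabilityMeasure P]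
    (T : ℕ → Ω → ℝ × ℝ) (μi μj : ℝ) (vi vj : ℝ → ℝ)
    (hmeas : ∀ n, Measurable (T n))
    (hindep : iIndepFun T P)
    (hident : ∀ n, IdentDistrib (T n) (T 0) P P)
    (hnonneg : ∀ n, ∀ᵐ ω ∂P, 0 ≤ (T n ω).1 ∧ 0 ≤ (T n ω).2)
    (hint1 : Integrable (fun ω => (T 0 ω).1) P)
    (hint2 : Integrable (fun ω => (T 0 ω).2) P)
    (hmean1 : ∫ ω, (T 0 ω).1 ∂P = μi) (hmean2 : ∫ ω, (T 0 ω).2 ∂P = μj)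
    (hμi : 0 < μi) (hμj : 0 < μj)
    (hvnonneg : ∀ t, 0 ≤ t → 0 ≤ vi t ∧ 0 ≤ vj t)
    (hvjtop : Tendsto vj atTop atTop)
    (hliminf : μi / μj < Filter.liminf (fun t => vi t / vj t) atTop)
    (Ni Nj : ℝ → Ω → ℕ)
    (hNi : ∀ t ω, Ni t ω = sSup {n : ℕ | ∑ k ∈ Finset.range n, (T k ω).1 ≤ t})
    (hNj : ∀ t ω, Nj t ω = sSup {n : ℕ | ∑ k ∈ Finset.range n, (T k ω).2 ≤ t}) :
    (∀ᵐ ω ∂P,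
        Tendsto (fun t : ℝ => ((Ni (vi t) ω : ℝ) - (Nj (vj t) ω : ℝ)))
          atTop atTop) ∧
      Tendsto (fun t : ℝ => P {ω | Ni (vi t) ω ≤ Nj (vj t) ω}) atTop (𝓝 0) :=
  renewal_counts_separate_general P T μi μj vi vj hmeas hindep hident hint1 hint2 hmean1 hmean2 hμi
    hμj hvnonneg hvjtop hliminf Ni Nj hNi hNj
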